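/- For nonnegative integers n, m ≥ 1, p ≥ 1: P(n,m,p) = P(n-m+p-1, p-1, m+1), where both sides count 0 when the arguments are invalid. -/
import Mathlib


/-- `Pexact n m p` is the number of integer partitions of `n` into exactly `m` parts,
each part at most `p`; it is `0` when `n < 0`. -/
def Pexact (n : ℤ) (m p : ℕ) : ℕ :=
  if 0 ≤ n then
    Fintype.card {π : Nat.Partition n.toNat // π.parts.card = m ∧ ∀ x ∈ π.parts, x ≤ p}
  else 0

namespace PexactAux

/-- the conjugate-shift map on multisets -/
def F (N : ℕ) (t : Multiset ℕ) : Multiset ℕ :=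
  (Multiset.range N).map (fun j => t.countP (fun x => j + 2 ≤ x) + 1)

lemma card_F (N : ℕ) (t : Multiset ℕ) : Multiset.card (F N t) = N := by
  simp [F]

lemma mem_F {N : ℕ} {t : Multiset ℕ} {x : ℕ} (hx : x ∈ F N t) :
    1 ≤ x ∧ x ≤ Multiset.card t + 1 := by
  simp only [F, Multiset.mem_map, Multiset.mem_range] at hx
  obtain ⟨j, -, rfl⟩ := hx
  exact ⟨Nat.le_add_left _ _, by
    have := Multiset.countP_le_card (fun x => j + 2 ≤ x) t
    omega⟩

lemma countP_mono {p q : ℕ → Prop} [DecidablePred p] [DecidablePred q]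
    (t : Multiset ℕ) (h : ∀ x, p x → q x) : t.countP p ≤ t.countP q := by
  induction t using Multiset.induction with
  | empty => simp
  | cons a s ih =>
    rw [Multiset.countP_cons, Multiset.countP_cons]
    by_cases hpa : p a
    · simp [hpa, h a hpa]; omega
    · simp [hpa]; split <;> omega

lemma countP_F (N : ℕ) (t : Multiset ℕ) (q : ℕ → Prop) [DecidablePred q] :
    (F N t).countP q
      = ((Finset.range N).filter
          (fun j => q (t.countP (fun x => j + 2 ≤ x) + 1))).card := by
  rw [F, Multiset.countP_map]
  rfl

lemma sum_cnt (N : ℕ) (t : Multiset ℕ) :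
    (∀ x ∈ t, x ≤ N + 1) →
    (∑ j ∈ Finset.range N, t.countP (fun x => j + 2 ≤ x)) = (t.map (· - 1)).sum := by
  induction t using Multiset.induction with
  | empty => simp
  | cons a s ih =>
    intro h
    have ha : a ≤ N + 1 := h a (Multiset.mem_cons_self a s)
    simp only [Multiset.countP_cons, Multiset.map_cons, Multiset.sum_cons]
    rw [Finset.sum_add_distrib, ih (fun x hx => h x (Multiset.mem_cons_of_mem hx))]
    have hfc : (Finset.range N).filter (fun j => j + 2 ≤ a) = Finset.range (a - 1) := by
      ext j; simp only [Finset.mem_filter, Finset.mem_range]; omega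
    rw [← Finset.card_filter, hfc, Finset.card_range]
    omega

lemma map_sub_sum (t : Multiset ℕ) :
    (∀ x ∈ t, 1 ≤ x) → (t.map (· - 1)).sum + Multiset.card t = t.sum := by
  induction t using Multiset.induction with
  | empty => simp
  | cons a s ih =>
    intro h
    have ha : 1 ≤ a := h a (Multiset.mem_cons_self a s)
    have := ih (fun x hx => h x (Multiset.mem_cons_of_mem hx))
    simp only [Multiset.map_cons, Multiset.sum_cons, Multiset.card_cons]
    omega

lemma card_le_sum (t : Multiset ℕ) :
    (∀ x ∈ t, 1 ≤ x) → Multiset.card t ≤ t.sum := by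
  induction t using Multiset.induction with
  | empty => simp
  | cons a s ih =>
    intro h
    have ha : 1 ≤ a := h a (Multiset.mem_cons_self a s)
    have := ih (fun x hx => h x (Multiset.mem_cons_of_mem hx))
    simp only [Multiset.card_cons, Multiset.sum_cons]
    omega

lemma sum_F (N : ℕ) (t : Multiset ℕ) (h1 : ∀ x ∈ t, 1 ≤ x) (h2 : ∀ x ∈ t, x ≤ N + 1) :
    (F N t).sum + Multiset.card t = N + t.sum := by
  have hFsum : (F N t).sum = ∑ j ∈ Finset.range N, (t.countP (fun x => j + 2 ≤ x) + 1) := rfl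
  rw [hFsum, Finset.sum_add_distrib, Finset.sum_const, Finset.card_range, smul_eq_mul,
    mul_one, sum_cnt N t h2]
  have := map_sub_sum t h1
  omega

lemma ext_countP {s t : Multiset ℕ}
    (h : ∀ k, s.countP (fun x => k ≤ x) = t.countP (fun x => k ≤ x)) : s = t := by
  have key : ∀ (u : Multiset ℕ) (a : ℕ),
      u.countP (fun x => a ≤ x) = u.count a + u.countP (fun x => a + 1 ≤ x) := by
    intro u a
    induction u using Multiset.induction with
    | empty => simp
    | cons b v ih =>
      rw [Multiset.countP_cons, Multiset.countP_cons, Multiset.count_cons, ih]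
      split_ifs <;> omega
  ext a
  have h1 := h a
  have h2 := h (a + 1)
  have ks := key s a
  have kt := key t a
  omega

lemma seg {g : ℕ → ℕ} (hg : ∀ i j, i ≤ j → g j ≤ g i) (N K c : ℕ) (hK : 1 ≤ K) :
    K ≤ ((Finset.range N).filter (fun i => c ≤ g i)).card ↔ K ≤ N ∧ c ≤ g (K - 1) := by
  constructor
  · intro h
    have hN : K ≤ N := by
      have := Finset.card_filter_le (Finset.range N) (fun i => c ≤ g i)
      simp at this; omega
    refine ⟨hN, ?_⟩
    by_contra hc
    push_neg at hc
    have hsub : (Finset.range N).filter (fun i => c ≤ g i) ⊆ Finset.range (K - 1) := by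
      intro i hi
      simp only [Finset.mem_filter, Finset.mem_range] at hi ⊢
      by_contra hK'
      push_neg at hK'
      exact absurd (hi.2.trans (hg _ _ hK')) (by omega)
    have := Finset.card_le_card hsub
    simp at this; omega
  · rintro ⟨hN, hc⟩
    have hsub : Finset.range K ⊆ (Finset.range N).filter (fun i => c ≤ g i) := by
      intro i hi
      simp only [Finset.mem_range, Finset.mem_filter] at hi ⊢
      exact ⟨by omega, hc.trans (hg i (K - 1) (by omega))⟩
    have := Finset.card_le_card hsub
    simpa using this

lemma F_F (s : Multiset ℕ) (p' : ℕ) (hpos : ∀ x ∈ s, 1 ≤ x) (hub : ∀ x ∈ s, x ≤ p' + 1) :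
    F (Multiset.card s) (F p' s) = s := by
  set m := Multiset.card s with hm
  apply ext_countP
  intro k
  have hganti : ∀ i j, i ≤ j →
      s.countP (fun x => j + 2 ≤ x) ≤ s.countP (fun x => i + 2 ≤ x) :=
    fun i j hij => countP_mono s (fun x hx => by omega)
  rw [countP_F]
  have hinner : ∀ j, (F p' s).countP (fun x => j + 2 ≤ x)
      = ((Finset.range p').filter (fun i => j + 1 ≤ s.countP (fun x => i + 2 ≤ x))).card := by
    intro j
    rw [countP_F]
    congr 1
    apply Finset.filter_congr
    intro i _
    first
      | omega
      | (rw [eq_iff_iff]; omega)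
      | (constructor <;> intro <;> omega)
  by_cases hk : k ≤ 1
  · have hall : ((Finset.range m).filter
        (fun j => k ≤ (F p' s).countP (fun x => j + 2 ≤ x) + 1)) = Finset.range m := by
      apply Finset.filter_true_of_mem
      intro j _
      omega
    rw [hall, Finset.card_range]
    symm
    rw [Multiset.countP_eq_card]
    · exact fun a ha => le_trans hk (hpos a ha)
  · push_neg at hk
    by_cases hkp : k - 1 ≤ p'
    · have hcond : ∀ j, (k ≤ (F p' s).countP (fun x => j + 2 ≤ x) + 1)
          ↔ (j + 1 ≤ s.countP (fun x => (k - 2) + 2 ≤ x)) := by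
        intro j
        rw [hinner j]
        have hiff := seg hganti p' (k - 1) (j + 1) (by omega)
        have heq : k - 1 - 1 = k - 2 := by omega
        rw [heq] at hiff
        omega
      have hfe : ((Finset.range m).filter
            (fun j => k ≤ (F p' s).countP (fun x => j + 2 ≤ x) + 1))
          = Finset.range (s.countP (fun x => (k - 2) + 2 ≤ x)) := by
        have hle : s.countP (fun x => (k - 2) + 2 ≤ x) ≤ m :=
          Multiset.countP_le_card _ s
        ext j
        simp only [Finset.mem_filter, Finset.mem_range, hcond j]
        omega
      rw [hfe, Finset.card_range]
      apply Multiset.countP_congr rfl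
      intro x _
      first
        | omega
        | (rw [eq_iff_iff]; omega)
        | (constructor <;> intro <;> omega)
    · push_neg at hkp
      have hnone : ((Finset.range m).filter
          (fun j => k ≤ (F p' s).countP (fun x => j + 2 ≤ x) + 1)) = ∅ := by
        apply Finset.filter_false_of_mem
        intro j _
        rw [hinner j]
        have := Finset.card_filter_le (Finset.range p')
          (fun i => j + 1 ≤ s.countP (fun x => i + 2 ≤ x))
        simp only [Finset.card_range] at this
        omega
      rw [hnone, Finset.card_empty]
      symm
      rw [Multiset.countP_eq_zero]
      intro a ha
      have := hub a ha
      omega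

lemma card_zero_of_lt (n' : ℤ) (m' p' : ℕ) (h : n' < m') : Pexact n' m' p' = 0 := by
  unfold Pexact
  split
  · rename_i hn
    rw [Fintype.card_eq_zero_iff]
    constructor
    rintro ⟨π, hcard, -⟩
    have hle : Multiset.card π.parts ≤ π.parts.sum :=
      card_le_sum π.parts (fun x hx => π.parts_pos hx)
    rw [hcard, π.parts_sum] at hle
    omega
  · rfl

end PexactAux

theorem Pexact_conj (n m p : ℕ) (hm : 1 ≤ m) (hp : 1 ≤ p) :
    Pexact n m p = Pexact ((n : ℤ) - m + p - 1) (p - 1) (m + 1) := by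
  open PexactAux in
  by_cases hnm : n < m
  · rw [card_zero_of_lt n m p (by exact_mod_cast hnm),
      card_zero_of_lt _ (p - 1) (m + 1) (by omega)]
  · push_neg at hnm
    unfold Pexact
    rw [if_pos (by positivity), if_pos (by omega)]
    apply Fintype.card_congr
    have hA : ((n : ℤ)).toNat = n := by omega
    have hB : (((n : ℤ) - m + p - 1)).toNat = n - m + (p - 1) := by omega
    refine
      { toFun := fun π => ⟨⟨F (p - 1) π.1.parts, ?_, ?_⟩, ?_, ?_⟩
        invFun := fun σ => ⟨⟨F m σ.1.parts, ?_, ?_⟩, ?_, ?_⟩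
        left_inv := ?_
        right_inv := ?_ }
    · intro i hi
      exact (mem_F hi).1
    · -- sum of F (p-1) parts
      obtain ⟨π, hcard, hub⟩ := π
      have h1 : ∀ x ∈ π.parts, 1 ≤ x := fun x hx => π.parts_pos hx
      have h2 : ∀ x ∈ π.parts, x ≤ (p - 1) + 1 := by
        intro x hx; have := hub x hx; omega
      have := sum_F (p - 1) π.parts h1 h2
      rw [hcard, π.parts_sum] at this
      show (F (p - 1) π.parts).sum = ((n : ℤ) - m + p - 1).toNat
      omega
    · simp [card_F]
    · intro x hx
      have := mem_F hx
      have hc := π.2.1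
      omega
    · intro i hi
      exact (mem_F hi).1
    · obtain ⟨σ, hcard, hub⟩ := σ
      have h1 : ∀ x ∈ σ.parts, 1 ≤ x := fun x hx => σ.parts_pos hx
      have h2 : ∀ x ∈ σ.parts, x ≤ m + 1 := hub
      have := sum_F m σ.parts h1 h2
      rw [hcard, σ.parts_sum] at this
      show (F m σ.parts).sum = ((n : ℤ)).toNat
      omega
    · simp [card_F]
    · intro x hx
      have := mem_F hx
      have hc := σ.2.1
      omega
    · rintro ⟨π, hcard, hub⟩
      apply Subtype.ext
      apply Nat.Partition.ext
      simp only
      have h1 : ∀ x ∈ π.parts, 1 ≤ x := fun x hx => π.parts_pos hx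
      have h2 : ∀ x ∈ π.parts, x ≤ (p - 1) + 1 := by
        intro x hx; have := hub x hx; omega
      have := F_F π.parts (p - 1) h1 h2
      rw [hcard] at this
      exact this
    · rintro ⟨σ, hcard, hub⟩
      apply Subtype.ext
      apply Nat.Partition.ext
      simp only
      have h1 : ∀ x ∈ σ.parts, 1 ≤ x := fun x hx => σ.parts_pos hx
      have := F_F σ.parts m h1 hub
      rw [hcard] at this
      exact this
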